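/- Let 𝕋 = {z ∈ ℂ : |z| = 1} with normalized Haar probability measure μ, and let (m₁, m₂) be a filter bank of bounded measurable functions on 𝕋, with associated operators (Sᵢξ)(z) = mᵢ(z)·ξ(z²) on L²(𝕋, μ). For f ∈ L^∞(𝕋, μ) let M_f denote the multiplication operator (M_f ξ)(z) = f(z)ξ(z), and let β(f)(z) = f(z²). Then for every f ∈ L^∞(𝕋, μ): (1) M_{β(f)}·Sᵢ = Sᵢ·M_f for i = 1, 2; and (2) M_{β(f)} = S₁ M_f S₁* + S₂ M_f S₂*. -/

import Mathlib

/-!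
Squaring and `z ↦ -z` preserve Haar measure on the circle, so
`⟪S_p v, S_q ξ⟫ = ∫ conj p(z) q(z) ⟪v, ξ⟫(z²) dμ` only sees the even part of the weight `conj p · q`,
which the filter-bank relations make `δ_pq`: hence `Sᵢ* Sⱼ = δᵢⱼ`. The same relations say that the
matrix `(mᵢ(±z)) / √2` is unitary, so its columns are orthonormal as well; this writes every `η ∈ L²`
as `S₁ G₁ + S₂ G₂` with `Gᵢ(z²) = (conj mᵢ(z) η(z) + conj mᵢ(-z) η(-z)) / 2` (the right side is even
in `z`, hence a function of `z²`), and so `S₁ S₁* + S₂ S₂* = 1`. The covariance `M_{β f} Sᵢ = Sᵢ M_f`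
is read off from the formulas, and then `M_{β f} = M_{β f} (S₁ S₁* + S₂ S₂*) = S₁ M_f S₁* + S₂ M_f S₂*`.
-/

open MeasureTheory ComplexConjugate ContinuousLinearMap

/-- The normalized Haar (arc-length) probability measure on the unit circle,
realized as a measure on `ℂ`. -/
noncomputable def haarCircle : Measure ℂ :=
  Measure.map (fun t : ℝ => Complex.exp (2 * Real.pi * Complex.I * t))
    (volume.restrict (Set.Ioc (0 : ℝ) 1))

lemma measurePreserving_toCircle_haarCircle :
    MeasurePreserving (fun x : UnitAddCircle => (AddCircle.toCircle x : ℂ)) volume haarCircle := by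
  have hmk := UnitAddCircle.measurePreserving_mk 0
  rw [zero_add] at hmk
  have hcont : Continuous fun x : UnitAddCircle => (AddCircle.toCircle x : ℂ) :=
    continuous_subtype_val.comp AddCircle.continuous_toCircle
  refine ⟨hcont.measurable, ?_⟩
  rw [haarCircle, ← hmk.map_eq, Measure.map_map hcont.measurable hmk.measurable]
  congr 1
  funext t
  simp only [Function.comp_apply, AddCircle.toCircle_apply_mk, div_one, Circle.coe_exp,
    Complex.ofReal_mul, Complex.ofReal_ofNat]
  congr 1
  ring

instance : IsProbabilityMeasure haarCircle := by
  have h := measurePreserving_toCircle_haarCircle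
  have : IsProbabilityMeasure (volume : Measure UnitAddCircle) := ⟨UnitAddCircle.measure_univ⟩
  rw [← h.map_eq]
  exact Measure.isProbabilityMeasure_map h.aemeasurable

lemma measurePreserving_haarCircle_of_semiconj {T : ℂ → ℂ} (hT : Measurable T)
    {g : UnitAddCircle → UnitAddCircle} (hg : MeasurePreserving g)
    (hTg : ∀ x, T (AddCircle.toCircle x) = AddCircle.toCircle (g x)) :
    MeasurePreserving T haarCircle haarCircle := by
  have h := measurePreserving_toCircle_haarCircle
  refine ⟨hT, ?_⟩
  calc haarCircle.map T
      = (volume.map fun x : UnitAddCircle => (AddCircle.toCircle x : ℂ)).map T := by rw [h.map_eq]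
    _ = volume.map fun x => (AddCircle.toCircle (g x) : ℂ) := by
      rw [Measure.map_map hT h.measurable]
      exact congrArg (Measure.map · volume) (funext hTg)
    _ = haarCircle := (h.comp hg).map_eq

lemma measurePreserving_sq_haarCircle :
    MeasurePreserving (fun z : ℂ => z ^ 2) haarCircle haarCircle :=
  measurePreserving_haarCircle_of_semiconj (by fun_prop)
    (AddCircle.ergodic_nsmul one_lt_two).toMeasurePreserving
    fun x => by simp [AddCircle.toCircle_nsmul]

lemma measurePreserving_neg_haarCircle :
    MeasurePreserving (fun z : ℂ => -z) haarCircle haarCircle :=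
  measurePreserving_haarCircle_of_semiconj (by fun_prop)
    (measurePreserving_add_left volume ((2⁻¹ : ℝ) : UnitAddCircle))
    fun x => by
      rw [AddCircle.toCircle_add, AddCircle.toCircle_apply_mk]
      simp only [Circle.coe_mul, Circle.coe_exp]
      rw [show ((2 * Real.pi / 1 * 2⁻¹ : ℝ) : ℂ) * Complex.I = Real.pi * Complex.I by
        push_cast; ring, Complex.exp_pi_mul_I, neg_one_mul]

lemma integral_comp_sq_haarCircle {E : Type*} [NormedAddCommGroup E] [NormedSpace ℝ E]
    {H : ℂ → E} (hH : AEStronglyMeasurable H haarCircle) :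
    ∫ z, H (z ^ 2) ∂haarCircle = ∫ w, H w ∂haarCircle := by
  have h := measurePreserving_sq_haarCircle
  conv_rhs => rw [← h.map_eq]
  exact (integral_map h.aemeasurable (by rwa [h.map_eq])).symm

lemma integral_comp_neg_haarCircle {E : Type*} [NormedAddCommGroup E] [NormedSpace ℝ E]
    (H : ℂ → E) : ∫ z, H (-z) ∂haarCircle = ∫ w, H w ∂haarCircle :=
  measurePreserving_neg_haarCircle.integral_comp (Homeomorph.neg ℂ).measurableEmbedding H

lemma integral_mul_comp_sq_haarCircle {k H : ℂ → ℂ} {C : ℝ} (hk : AEStronglyMeasurable k haarCircle)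
    (hkC : ∀ᵐ z ∂haarCircle, ‖k z‖ ≤ C) (hH : Integrable H haarCircle) {c : ℂ}
    (hc : ∀ᵐ z ∂haarCircle, k z + k (-z) = 2 * c) :
    ∫ z, k z * H (z ^ 2) ∂haarCircle = c * ∫ w, H w ∂haarCircle := by
  have hint : Integrable (fun z => k z * H (z ^ 2)) haarCircle :=
    (measurePreserving_sq_haarCircle.integrable_comp_of_integrable hH).bdd_mul hk hkC
  have hint_neg : Integrable (fun z => k (-z) * H ((-z) ^ 2)) haarCircle :=
    measurePreserving_neg_haarCircle.integrable_comp_of_integrable hint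
  have hsum : ∀ᵐ z ∂haarCircle, k z * H (z ^ 2) + k (-z) * H ((-z) ^ 2) = 2 * c * H (z ^ 2) := by
    filter_upwards [hc] with z hz
    rw [neg_sq, ← add_mul, hz]
  refine mul_left_cancel₀ (two_ne_zero (α := ℂ)) ?_
  calc 2 * ∫ z, k z * H (z ^ 2) ∂haarCircle
      = ∫ z, k z * H (z ^ 2) ∂haarCircle + ∫ z, k (-z) * H ((-z) ^ 2) ∂haarCircle := by
        rw [integral_comp_neg_haarCircle (fun z => k z * H (z ^ 2)), two_mul]
    _ = ∫ z, 2 * c * H (z ^ 2) ∂haarCircle := by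
        rw [← integral_add hint hint_neg, integral_congr_ae hsum]
    _ = 2 * (c * ∫ w, H w ∂haarCircle) := by
        rw [integral_const_mul, integral_comp_sq_haarCircle hH.aestronglyMeasurable, mul_assoc]

lemma exists_Lp_comp_sq_ae_eq {E : Type*} [NormedAddCommGroup E] {p : ENNReal} {F : ℂ → E}
    (hF : StronglyMeasurable F) (hFeven : ∀ z, F (-z) = F z) (hFLp : MemLp F p haarCircle) :
    ∃ G : Lp E p haarCircle, (fun z => G (z ^ 2)) =ᵐ[haarCircle] F := by
  have h := measurePreserving_sq_haarCircle
  have hroot : ∀ z : ℂ, F ((z ^ 2) ^ (2⁻¹ : ℂ)) = F z := fun z => by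
    rcases sq_eq_sq_iff_eq_or_eq_neg.mp (Complex.cpow_ofNat_inv_pow (z ^ 2) 2) with hz | hz
    · rw [hz]
    · rw [hz, hFeven]
  have hGmeas : StronglyMeasurable fun w : ℂ => F (w ^ (2⁻¹ : ℂ)) :=
    hF.comp_measurable (by fun_prop)
  have hG : MemLp (fun w : ℂ => F (w ^ (2⁻¹ : ℂ))) p haarCircle := by
    rw [← h.map_eq, memLp_map_measure_iff (h.map_eq ▸ hGmeas.aestronglyMeasurable) h.aemeasurable]
    simpa only [Function.comp_def, hroot] using hFLp
  exact ⟨hG.toLp _, (h.quasiMeasurePreserving.ae_eq hG.coeFn_toLp).trans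
    (.of_forall fun z => hroot z)⟩

local notation "L²" => Lp ℂ 2 haarCircle

lemma exists_Lp_comp_sq_ae_eq_half_sum {m : ℂ → ℂ} (hm : Measurable m) {C : ℝ}
    (hmC : ∀ᵐ z ∂haarCircle, ‖m z‖ ≤ C) (η : L²) :
    ∃ G : L², (fun z => G (z ^ 2)) =ᵐ[haarCircle]
      fun z => (conj (m z) * η z + conj (m (-z)) * η (-z)) / 2 := by
  have hη : Measurable η := (Lp.stronglyMeasurable η).measurable
  have hconj_m : MemLp (fun z => conj (m z)) ⊤ haarCircle :=
    memLp_top_of_bound (by fun_prop) C (by simpa only [Complex.norm_conj] using hmC)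
  have hconj_m_neg : MemLp (fun z => conj (m (-z))) ⊤ haarCircle :=
    hconj_m.comp_measurePreserving measurePreserving_neg_haarCircle
  have hη_neg : MemLp (fun z => η (-z)) 2 haarCircle :=
    (Lp.memLp η).comp_measurePreserving measurePreserving_neg_haarCircle
  refine exists_Lp_comp_sq_ae_eq (by fun_prop) (fun z => by rw [neg_neg]; ring) ?_
  simpa only [div_eq_inv_mul, Pi.add_apply] using
    (((Lp.memLp η).mul' hconj_m).add (hη_neg.mul' hconj_m_neg)).const_mul (2⁻¹ : ℂ)

def IsWeightedDoublingOp (m : ℂ → ℂ) (S : L² →L[ℂ] L²) : Prop :=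
  ∀ ξ : L², ⇑(S ξ) =ᵐ[haarCircle] fun z => m z * ξ (z ^ 2)

def IsMultiplicationOp (f : ℂ → ℂ) (M : L² →L[ℂ] L²) : Prop :=
  ∀ ξ : L², ⇑(M ξ) =ᵐ[haarCircle] fun z => f z * ξ z

namespace IsWeightedDoublingOp

variable {m : ℂ → ℂ} {S : L² →L[ℂ] L²}

theorem comp_eq_comp {f : ℂ → ℂ} {Mf Mβf : L² →L[ℂ] L²} (hS : IsWeightedDoublingOp m S)
    (hMf : IsMultiplicationOp f Mf) (hMβf : IsMultiplicationOp (fun z => f (z ^ 2)) Mβf) :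
    Mβf.comp S = S.comp Mf := by
  ext1 ξ
  refine Lp.ext ?_
  have hMf_sq : (fun z => Mf ξ (z ^ 2)) =ᵐ[haarCircle] fun z => f (z ^ 2) * ξ (z ^ 2) :=
    measurePreserving_sq_haarCircle.quasiMeasurePreserving.ae_eq (hMf ξ)
  filter_upwards [hMβf (S ξ), hS ξ, hS (Mf ξ), hMf_sq] with z h₁ h₂ h₃ h₄
  rw [comp_apply, comp_apply, h₁, h₂, h₃, h₄]
  ring

theorem inner_eq {p q : ℂ → ℂ} {Sp Sq : L² →L[ℂ] L²} (hSp : IsWeightedDoublingOp p Sp)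
    (hSq : IsWeightedDoublingOp q Sq) (hp : AEStronglyMeasurable p haarCircle)
    (hq : AEStronglyMeasurable q haarCircle) {Cp Cq : ℝ} (hpC : ∀ᵐ z ∂haarCircle, ‖p z‖ ≤ Cp)
    (hqC : ∀ᵐ z ∂haarCircle, ‖q z‖ ≤ Cq) {c : ℂ}
    (hc : ∀ᵐ z ∂haarCircle, conj (p z) * q z + conj (p (-z)) * q (-z) = 2 * c) (v ξ : L²) :
    inner ℂ (Sp v) (Sq ξ) = c * inner ℂ v ξ := by
  have hk : ∀ᵐ z ∂haarCircle, ‖conj (p z) * q z‖ ≤ Cp * Cq := by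
    filter_upwards [hpC, hqC] with z hpz hqz
    rw [norm_mul, Complex.norm_conj]
    exact mul_le_mul hpz hqz (norm_nonneg _) ((norm_nonneg _).trans hpz)
  rw [L2.inner_def, L2.inner_def, ← integral_mul_comp_sq_haarCircle
    (hp.star.mul hq) hk (L2.integrable_inner v ξ) hc]
  refine integral_congr_ae ?_
  filter_upwards [hSp v, hSq ξ] with z hv hξ
  simp only [hv, hξ, RCLike.inner_apply, map_mul, Pi.mul_apply, Pi.star_apply, Complex.star_def]
  ring

theorem adjoint_comp_eq {p q : ℂ → ℂ} {Sp Sq : L² →L[ℂ] L²} (hSp : IsWeightedDoublingOp p Sp)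
    (hSq : IsWeightedDoublingOp q Sq) (hp : AEStronglyMeasurable p haarCircle)
    (hq : AEStronglyMeasurable q haarCircle) {Cp Cq : ℝ} (hpC : ∀ᵐ z ∂haarCircle, ‖p z‖ ≤ Cp)
    (hqC : ∀ᵐ z ∂haarCircle, ‖q z‖ ≤ Cq) {c : ℂ}
    (hc : ∀ᵐ z ∂haarCircle, conj (p z) * q z + conj (p (-z)) * q (-z) = 2 * c) :
    (adjoint Sp).comp Sq = c • ContinuousLinearMap.id ℂ L² := by
  ext1 ξ
  refine ext_inner_left ℂ fun v => ?_
  rw [comp_apply, adjoint_inner_right, hSp.inner_eq hSq hp hq hpC hqC hc, smul_apply, id_apply,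
    inner_smul_right]

end IsWeightedDoublingOp

open Matrix in
lemma orthogonal_columns_of_orthogonal_rows {a b c d : ℂ} (h₁ : ‖a‖ ^ 2 + ‖b‖ ^ 2 = 2) (h₂ : ‖c‖ ^ 2 + ‖d‖ ^ 2 = 2)
    (h : conj a * c + conj b * d = 0) :
    a * conj a + c * conj c = 2 ∧ a * conj b + c * conj d = 0 := by
  have h₁' : a * conj a + b * conj b = 2 := by simp only [Complex.mul_conj']; exact_mod_cast h₁
  have h₂' : c * conj c + d * conj d = 2 := by simp only [Complex.mul_conj']; exact_mod_cast h₂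
  have h' : a * conj c + b * conj d = 0 := by simpa using congrArg conj h
  have hrows : !![a, b; c, d] * !![conj a / 2, conj c / 2; conj b / 2, conj d / 2] = 1 := by
    rw [mul_fin_two, one_fin_two]
    congr 1
    refine vec2_eq (vec2_eq ?_ ?_) (vec2_eq ?_ ?_)
    · linear_combination h₁' / 2
    · linear_combination h' / 2
    · linear_combination h / 2
    · linear_combination h₂' / 2
  have hcols := mul_eq_one_comm.mp hrows
  rw [mul_fin_two, one_fin_two] at hcols
  have e₀₀ : conj a / 2 * a + conj c / 2 * c = 1 := congrFun (congrFun hcols 0) 0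
  have e₁₀ : conj b / 2 * a + conj d / 2 * c = 0 := congrFun (congrFun hcols 1) 0
  exact ⟨by linear_combination 2 * e₀₀, by linear_combination 2 * e₁₀⟩

lemma ae_norm_le_two_of_filter {m : ℂ → ℂ}
    (hm : ∀ᵐ z ∂haarCircle, ‖m z‖ ^ 2 + ‖m (-z)‖ ^ 2 = 2) : ∀ᵐ z ∂haarCircle, ‖m z‖ ≤ 2 := by
  filter_upwards [hm] with z hz
  nlinarith [norm_nonneg (m z), sq_nonneg ‖m (-z)‖]

lemma ae_conj_mul_self_add_of_filter {m : ℂ → ℂ}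
    (hm : ∀ᵐ z ∂haarCircle, ‖m z‖ ^ 2 + ‖m (-z)‖ ^ 2 = 2) :
    ∀ᵐ z ∂haarCircle, conj (m z) * m z + conj (m (-z)) * m (-z) = 2 * 1 := by
  filter_upwards [hm] with z hz
  rw [Complex.conj_mul', Complex.conj_mul', mul_one]
  exact_mod_cast hz

section FilterBank

variable {m₁ m₂ : ℂ → ℂ} {S₁ S₂ : L² →L[ℂ] L²}

theorem exists_eq_add_of_filterBank (hS₁ : IsWeightedDoublingOp m₁ S₁)
    (hS₂ : IsWeightedDoublingOp m₂ S₂) (h₁meas : Measurable m₁) (h₂meas : Measurable m₂)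
    (hfil₁ : ∀ᵐ z ∂haarCircle, ‖m₁ z‖ ^ 2 + ‖m₁ (-z)‖ ^ 2 = 2)
    (hfil₂ : ∀ᵐ z ∂haarCircle, ‖m₂ z‖ ^ 2 + ‖m₂ (-z)‖ ^ 2 = 2)
    (horth : ∀ᵐ z ∂haarCircle, conj (m₁ z) * m₂ z + conj (m₁ (-z)) * m₂ (-z) = 0) (η : L²) :
    ∃ G₁ G₂ : L², η = S₁ G₁ + S₂ G₂ := by
  obtain ⟨G₁, hG₁⟩ := exists_Lp_comp_sq_ae_eq_half_sum h₁meas (ae_norm_le_two_of_filter hfil₁) η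
  obtain ⟨G₂, hG₂⟩ := exists_Lp_comp_sq_ae_eq_half_sum h₂meas (ae_norm_le_two_of_filter hfil₂) η
  refine ⟨G₁, G₂, Lp.ext ?_⟩
  filter_upwards [hfil₁, hfil₂, horth, hG₁, hG₂, hS₁ G₁, hS₂ G₂, Lp.coeFn_add (S₁ G₁) (S₂ G₂)]
    with z h₁ h₂ h₁₂ hg₁ hg₂ hs₁ hs₂ hadd
  obtain ⟨hdiag, hoff⟩ := orthogonal_columns_of_orthogonal_rows h₁ h₂ h₁₂
  rw [hadd, Pi.add_apply, hs₁, hs₂, hg₁, hg₂]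
  linear_combination (-η z / 2) * hdiag + (-η (-z) / 2) * hoff

theorem cuntz_sum_eq_id_of_filterBank (hS₁ : IsWeightedDoublingOp m₁ S₁)
    (hS₂ : IsWeightedDoublingOp m₂ S₂) (h₁meas : Measurable m₁) (h₂meas : Measurable m₂)
    (hfil₁ : ∀ᵐ z ∂haarCircle, ‖m₁ z‖ ^ 2 + ‖m₁ (-z)‖ ^ 2 = 2)
    (hfil₂ : ∀ᵐ z ∂haarCircle, ‖m₂ z‖ ^ 2 + ‖m₂ (-z)‖ ^ 2 = 2)
    (horth : ∀ᵐ z ∂haarCircle, conj (m₁ z) * m₂ z + conj (m₁ (-z)) * m₂ (-z) = 0) :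
    S₁.comp (adjoint S₁) + S₂.comp (adjoint S₂) = ContinuousLinearMap.id ℂ L² := by
  have hm₁ := h₁meas.aestronglyMeasurable (μ := haarCircle)
  have hm₂ := h₂meas.aestronglyMeasurable (μ := haarCircle)
  have hb₁ := ae_norm_le_two_of_filter hfil₁
  have hb₂ := ae_norm_le_two_of_filter hfil₂
  have h₁₁ := hS₁.adjoint_comp_eq hS₁ hm₁ hm₁ hb₁ hb₁ (ae_conj_mul_self_add_of_filter hfil₁)
  have h₂₂ := hS₂.adjoint_comp_eq hS₂ hm₂ hm₂ hb₂ hb₂ (ae_conj_mul_self_add_of_filter hfil₂)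
  have h₁₂ := hS₁.adjoint_comp_eq hS₂ hm₁ hm₂ hb₁ hb₂ (c := 0) (by simpa only [mul_zero])
  have h₂₁ : (adjoint S₂).comp S₁ = 0 := by
    rw [← adjoint_adjoint S₁, ← adjoint_comp, h₁₂, zero_smul, map_zero]
  ext1 η
  obtain ⟨G₁, G₂, rfl⟩ := exists_eq_add_of_filterBank hS₁ hS₂ h₁meas h₂meas hfil₁ hfil₂ horth η
  have e₁ : adjoint S₁ (S₁ G₁ + S₂ G₂) = G₁ := by
    rw [map_add, ← comp_apply, ← comp_apply (adjoint S₁), h₁₁, h₁₂]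
    simp only [one_smul, id_apply, zero_smul, zero_apply, add_zero]
  have e₂ : adjoint S₂ (S₁ G₁ + S₂ G₂) = G₂ := by
    rw [map_add, ← comp_apply, ← comp_apply (adjoint S₂), h₂₁, h₂₂]
    simp only [zero_apply, one_smul, id_apply, zero_add]
  simp only [add_apply, comp_apply, e₁, e₂, id_apply]

end FilterBank

theorem stmt9_general (m₁ m₂ : ℂ → ℂ) (h₁meas : Measurable m₁) (h₂meas : Measurable m₂)
    (hfil₁ : ∀ᵐ z ∂haarCircle,
      ‖m₁ z‖ ^ 2 + ‖m₁ (-z)‖ ^ 2 = 2)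
    (hfil₂ : ∀ᵐ z ∂haarCircle,
      ‖m₂ z‖ ^ 2 + ‖m₂ (-z)‖ ^ 2 = 2)
    (horth : ∀ᵐ z ∂haarCircle,
      conj (m₁ z) * m₂ z + conj (m₁ (-z)) * m₂ (-z) = 0)
    (S₁ S₂ : Lp ℂ 2 haarCircle →L[ℂ] Lp ℂ 2 haarCircle)
    (hS₁ : ∀ ξ : Lp ℂ 2 haarCircle, ⇑(S₁ ξ) =ᵐ[haarCircle] fun z => m₁ z * ξ (z ^ 2))
    (hS₂ : ∀ ξ : Lp ℂ 2 haarCircle, ⇑(S₂ ξ) =ᵐ[haarCircle] fun z => m₂ z * ξ (z ^ 2))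
    (f : ℂ → ℂ)
    (Mf Mβf : Lp ℂ 2 haarCircle →L[ℂ] Lp ℂ 2 haarCircle)
    (hMf : ∀ ξ : Lp ℂ 2 haarCircle, ⇑(Mf ξ) =ᵐ[haarCircle] fun z => f z * ξ z)
    (hMβf : ∀ ξ : Lp ℂ 2 haarCircle, ⇑(Mβf ξ) =ᵐ[haarCircle] fun z => f (z ^ 2) * ξ z) :
    Mβf.comp S₁ = S₁.comp Mf ∧
    Mβf.comp S₂ = S₂.comp Mf ∧
    Mβf = (S₁.comp Mf).comp (adjoint S₁) + (S₂.comp Mf).comp (adjoint S₂) := by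
  have h₁ : Mβf.comp S₁ = S₁.comp Mf := IsWeightedDoublingOp.comp_eq_comp hS₁ hMf hMβf
  have h₂ : Mβf.comp S₂ = S₂.comp Mf := IsWeightedDoublingOp.comp_eq_comp hS₂ hMf hMβf
  refine ⟨h₁, h₂, ?_⟩
  calc Mβf = Mβf.comp (S₁.comp (adjoint S₁) + S₂.comp (adjoint S₂)) := by
        rw [cuntz_sum_eq_id_of_filterBank hS₁ hS₂ h₁meas h₂meas hfil₁ hfil₂ horth, comp_id]
    _ = (S₁.comp Mf).comp (adjoint S₁) + (S₂.comp Mf).comp (adjoint S₂) := by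
        rw [comp_add, ← comp_assoc, h₁, ← comp_assoc, h₂]

/-- For a filter bank `(m₁, m₂)` with Cuntz isometries `(Sᵢ ξ)(z) = mᵢ(z) ξ(z²)`, and
for every `f ∈ L^∞(𝕋, μ)` with multiplication operator `M_f` and `β(f)(z) = f(z²)`:
(1) `M_{β(f)} Sᵢ = Sᵢ M_f` for `i = 1, 2`; and (2) `M_{β(f)} = S₁ M_f S₁* + S₂ M_f S₂*`. -/
theorem stmt9 (m₁ m₂ : ℂ → ℂ) (h₁meas : Measurable m₁) (h₂meas : Measurable m₂)
    (h₁bd : ∃ C : ℝ, ∀ᵐ z ∂haarCircle, ‖m₁ z‖ ≤ C)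
    (h₂bd : ∃ C : ℝ, ∀ᵐ z ∂haarCircle, ‖m₂ z‖ ≤ C)
    (hfil₁ : ∀ᵐ z ∂haarCircle,
      ‖m₁ z‖ ^ 2 + ‖m₁ (-z)‖ ^ 2 = 2)
    (hfil₂ : ∀ᵐ z ∂haarCircle,
      ‖m₂ z‖ ^ 2 + ‖m₂ (-z)‖ ^ 2 = 2)
    (horth : ∀ᵐ z ∂haarCircle,
      conj (m₁ z) * m₂ z + conj (m₁ (-z)) * m₂ (-z) = 0)
    (S₁ S₂ : Lp ℂ 2 haarCircle →L[ℂ] Lp ℂ 2 haarCircle)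
    (hS₁ : ∀ ξ : Lp ℂ 2 haarCircle, ⇑(S₁ ξ) =ᵐ[haarCircle] fun z => m₁ z * ξ (z ^ 2))
    (hS₂ : ∀ ξ : Lp ℂ 2 haarCircle, ⇑(S₂ ξ) =ᵐ[haarCircle] fun z => m₂ z * ξ (z ^ 2))
    (f : ℂ → ℂ) (hfmeas : Measurable f)
    (hfbd : ∃ C : ℝ, ∀ᵐ z ∂haarCircle, ‖f z‖ ≤ C)
    (Mf Mβf : Lp ℂ 2 haarCircle →L[ℂ] Lp ℂ 2 haarCircle)
    (hMf : ∀ ξ : Lp ℂ 2 haarCircle, ⇑(Mf ξ) =ᵐ[haarCircle] fun z => f z * ξ z)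
    (hMβf : ∀ ξ : Lp ℂ 2 haarCircle, ⇑(Mβf ξ) =ᵐ[haarCircle] fun z => f (z ^ 2) * ξ z) :
    Mβf.comp S₁ = S₁.comp Mf ∧
    Mβf.comp S₂ = S₂.comp Mf ∧
    Mβf = (S₁.comp Mf).comp (adjoint S₁) + (S₂.comp Mf).comp (adjoint S₂) :=
  stmt9_general m₁ m₂ h₁meas h₂meas hfil₁ hfil₂ horth S₁ S₂ hS₁ hS₂ f Mf Mβf hMf hMβf
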